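/- arXiv:2010.03843 — 4 statements merged into one kernel-verified Lean document; each statement's English description precedes it below -/
import Mathlib

section
/- Let $A$ be an $n\times m$ complex matrix with $n\le m$, and let $L\subseteq\mathbb{C}^n$ be a linear subspace. Then there exist nonzero vectors $v\in\mathbb{C}^n$, $w\in\mathbb{C}^m$ and scalars $\lambda_1,\lambda_2\in\mathbb{C}$ with $Aw=\lambda_1 v$, $A^t v=\lambda_2 w$ and $v\in L$, if and only if the matrix $AA^t$ has an eigenvector in $L$. -/
open Matrix

/-!
A singular pair `(v, w)` gives `A Aᵀ v = λ₂ λ₁ v`. Conversely, for an eigenvector `v` of `A Aᵀ`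
take `w = Aᵀ v`; if that vanishes, then `rank A = rank Aᵀ < n ≤ m`, so some `w ≠ 0` has
`A w = 0`, and `(v, w)` is a singular pair with `λ₁ = λ₂ = 0`.
-/

namespace Matrix

variable {K ι κ : Type*} [Field K] [Fintype κ]

theorem exists_mulVec_eq_zero_iff_rank_lt (M : Matrix ι κ K) :
    (∃ w ≠ 0, M *ᵥ w = 0) ↔ M.rank < Fintype.card κ := by
  have rank_add_nullity : M.rank + Module.finrank K (LinearMap.ker M.mulVecLin) =
      Fintype.card κ := by
    rw [rank, LinearMap.finrank_range_add_finrank_ker, Module.finrank_fintype_fun_eq_card]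
  have ker_ne_bot_iff : (∃ w ≠ 0, M *ᵥ w = 0) ↔ LinearMap.ker M.mulVecLin ≠ ⊥ := by
    simp only [ne_eq, LinearMap.ker_eq_bot', mulVecLin_apply, not_forall, exists_prop]
    exact exists_congr fun w => and_comm
  rw [ker_ne_bot_iff, ← Submodule.one_le_finrank_iff]
  omega

theorem exists_mulVec_eq_zero_of_transpose_mulVec_eq_zero [Fintype ι] (A : Matrix ι κ K)
    (hcard : Fintype.card ι ≤ Fintype.card κ) {v : ι → K} (hv : v ≠ 0) (hAv : Aᵀ *ᵥ v = 0) :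
    ∃ w ≠ 0, A *ᵥ w = 0 := by
  have htrans : Aᵀ.rank < Fintype.card ι :=
    (exists_mulVec_eq_zero_iff_rank_lt Aᵀ).1 ⟨v, hv, hAv⟩
  rw [rank_transpose] at htrans
  exact (exists_mulVec_eq_zero_iff_rank_lt A).2 (htrans.trans_le hcard)

theorem exists_singular_partner_iff [Fintype ι] (A : Matrix ι κ K)
    (hcard : Fintype.card ι ≤ Fintype.card κ) {v : ι → K} (hv : v ≠ 0) :
    (∃ (w : κ → K) (l1 l2 : K), w ≠ 0 ∧ A *ᵥ w = l1 • v ∧ Aᵀ *ᵥ v = l2 • w) ↔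
      ∃ μ : K, (A * Aᵀ) *ᵥ v = μ • v := by
  constructor
  · rintro ⟨w, l1, l2, -, hAw, hAv⟩
    exact ⟨l2 * l1, by rw [← mulVec_mulVec, hAv, mulVec_smul, hAw, smul_smul]⟩
  · rintro ⟨μ, hμ⟩
    by_cases hAv : Aᵀ *ᵥ v = 0
    · obtain ⟨w, hw, hAw⟩ := A.exists_mulVec_eq_zero_of_transpose_mulVec_eq_zero hcard hv hAv
      exact ⟨w, 0, 0, hw, by rw [hAw, zero_smul], by rw [hAv, zero_smul]⟩
    · exact ⟨Aᵀ *ᵥ v, μ, 1, hAv, by rw [mulVec_mulVec, hμ], (one_smul K _).symm⟩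

end Matrix

/-- Kalman-variety membership for matrices, `n ≤ m`: a complex `n × m` matrix has a
singular pair `(v, w)` with `v` in the subspace `L` iff `A * Aᵀ` has an eigenvector in `L`. -/
theorem kalman_singular_pair_iff_eigenvector
    (n m : ℕ) (hnm : n ≤ m) (A : Matrix (Fin n) (Fin m) ℂ)
    (L : Submodule ℂ (Fin n → ℂ)) :
    (∃ (v : Fin n → ℂ) (w : Fin m → ℂ) (l1 l2 : ℂ), v ≠ 0 ∧ w ≠ 0 ∧ v ∈ L ∧
        A.mulVec w = l1 • v ∧ Aᵀ.mulVec v = l2 • w) ↔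
      (∃ (v : Fin n → ℂ) (μ : ℂ), v ≠ 0 ∧ v ∈ L ∧ (A * Aᵀ).mulVec v = μ • v) := by
  have hcard : Fintype.card (Fin n) ≤ Fintype.card (Fin m) := by simpa using hnm
  constructor
  · rintro ⟨v, w, l1, l2, hv, hw, hvL, hAw, hAv⟩
    obtain ⟨μ, hμ⟩ := (A.exists_singular_partner_iff hcard hv).1 ⟨w, l1, l2, hw, hAw, hAv⟩
    exact ⟨v, μ, hv, hvL, hμ⟩
  · rintro ⟨v, μ, hv, hvL, hμ⟩
    obtain ⟨w, l1, l2, hw, hAw, hAv⟩ := (A.exists_singular_partner_iff hcard hv).2 ⟨μ, hμ⟩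
    exact ⟨v, w, l1, l2, hv, hw, hvL, hAw, hAv⟩
end

section
/- For integers $1\le d\le n$, the coefficient of the monomial $h^{n-d}v^{d-1}w^{n-1}$ in the polynomial $\left(\sum_{j=0}^{n-1}(w+h)^{n-1-j}v^{j}\right)\left(\sum_{j=0}^{n-1}(v+h)^{n-1-j}w^{j}\right)$ in three commuting variables $h,v,w$ equals $2^{n-d}\binom{n}{d-1}$. -/
/-!
Expanding both binomials, the term `(w+h)^(n-1-j) v^j (v+h)^(n-1-k) w^k` of the product
contributes to `h^(n-d) v^(d-1) w^(n-1)` only when `j < d`: all of `w^(n-1-k)` must come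
from `(w+h)^(n-1-j)` and `v^(d-1-j)` from `(v+h)^(n-1-k)`, with coefficient
`C(n-1-j, n-1-k) C(n-1-k, d-1-j)`. Summing over `k` with
`∑ₘ C(N, m) C(m, r) = 2^(N-r) C(N, r)` leaves `2^(n-d) ∑_{j<d} C(n-1-j, d-1-j)`, and
parallel summation `∑_{i ≤ e} C(s+i, i) = C(s+e+1, e)` turns the last sum into `C(n, d-1)`.
-/

open MvPolynomial Finset

namespace Nat

theorem sum_range_choose_mul_choose (n k : ℕ) :
    ∑ m ∈ range (n + 1), n.choose m * m.choose k = 2 ^ (n - k) * n.choose k := by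
  rcases lt_or_ge n k with hnk | hkn
  · rw [choose_eq_zero_of_lt hnk, mul_zero]
    exact sum_eq_zero fun m hm =>
      mul_eq_zero_of_right _ (choose_eq_zero_of_lt (by grind))
  rw [← sum_range_add_sum_Ico _ (by omega : k ≤ n + 1),
    sum_eq_zero fun m hm => mul_eq_zero_of_right _ (choose_eq_zero_of_lt (mem_range.1 hm)),
    zero_add, sum_Ico_eq_sum_range, show n + 1 - k = n - k + 1 by omega, mul_comm,
    ← sum_range_choose, mul_sum]
  refine sum_congr rfl fun i _ => ?_
  rw [choose_mul le_self_add, Nat.add_sub_cancel_left]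

theorem sum_range_add_choose_self (s e : ℕ) :
    ∑ i ∈ range (e + 1), (s + i).choose i = (s + e + 1).choose e := by
  simp_rw [add_comm s, choose_symm_add, sum_range_add_choose]
  exact choose_symm_of_eq_add (by omega)

end Nat

theorem sum_range_sum_range_choose_mul_choose {n d : ℕ} (hd : 1 ≤ d) (hdn : d ≤ n) :
    ∑ j ∈ range n, ∑ k ∈ range n,
      (if j < d then (n - 1 - j).choose (n - 1 - k) * (n - 1 - k).choose (d - 1 - j) else 0) =
      2 ^ (n - d) * n.choose (d - 1) := by
  have inner : ∀ j < d,
      ∑ k ∈ range n, (n - 1 - j).choose (n - 1 - k) * (n - 1 - k).choose (d - 1 - j) =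
        2 ^ (n - d) * (n - 1 - j).choose (d - 1 - j) := by
    intro j hj
    rw [sum_range_reflect (fun m => (n - 1 - j).choose m * m.choose (d - 1 - j)) n,
      ← sum_subset (range_subset_range.2 (by omega : n - 1 - j + 1 ≤ n)) fun m _ hm =>
        mul_eq_zero_of_left (Nat.choose_eq_zero_of_lt (by simpa using hm)) _,
      Nat.sum_range_choose_mul_choose, show n - 1 - j - (d - 1 - j) = n - d by omega]
  calc _ = ∑ j ∈ range d, 2 ^ (n - d) * (n - 1 - j).choose (d - 1 - j) := by
        rw [← sum_subset (range_subset_range.2 hdn) fun j _ hj => by simp_all]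
        exact sum_congr rfl fun j hj => by
          simp only [mem_range] at hj; simp only [if_pos hj, inner j hj]
    _ = 2 ^ (n - d) * ∑ i ∈ range d, (n - d + i).choose i := by
        rw [mul_sum, ← sum_range_reflect]
        exact sum_congr rfl fun j hj => by
          simp only [mem_range] at hj; congr 2 <;> omega
    _ = _ := by
        obtain ⟨e, rfl⟩ := exists_add_of_le hd
        rw [add_comm 1 e, Nat.sum_range_add_choose_self]
        congr 2; omega

/-- The exponent of `h^p v^q w^r`, where `h = X 0`, `v = X 1`, `w = X 2`. -/
noncomputable def hvwExp (p q r : ℕ) : Fin 3 →₀ ℕ :=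
  Finsupp.single 0 p + Finsupp.single 1 q + Finsupp.single 2 r

section hvwExp

variable {p q r p' q' r' : ℕ}

theorem hvwExp_inj : hvwExp p q r = hvwExp p' q' r' ↔ p = p' ∧ q = q' ∧ r = r' := by
  simp [hvwExp, Finsupp.ext_iff, Fin.forall_fin_succ, Finsupp.single_apply]

theorem hvwExp_le_hvwExp :
    hvwExp p q r ≤ hvwExp p' q' r' ↔ p ≤ p' ∧ q ≤ q' ∧ r ≤ r' := by
  simp [hvwExp, Finsupp.le_def, Fin.forall_fin_succ, Finsupp.single_apply]

theorem hvwExp_sub_hvwExp :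
    hvwExp p q r - hvwExp p' q' r' = hvwExp (p - p') (q - q') (r - r') := by
  ext i; fin_cases i <;> simp [hvwExp]

theorem monomial_hvwExp {R : Type*} [CommSemiring R] (c : R) :
    monomial (hvwExp p q r) c = C c * X 0 ^ p * X 1 ^ q * X 2 ^ r := by
  simp only [hvwExp, C_mul_monomial, mul_one, X_pow_eq_monomial, monomial_mul]

end hvwExp

variable {R : Type*} [CommSemiring R]

theorem X_add_X_pow_mul_X_add_X_pow (m l : ℕ) :
    ((X 2 + X 0) ^ m * (X 1 + X 0) ^ l : MvPolynomial (Fin 3) R) =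
      ∑ a ∈ range (m + 1), ∑ b ∈ range (l + 1),
        monomial (hvwExp (m - a + (l - b)) b a) (m.choose a * l.choose b : R) := by
  rw [add_pow, add_pow, sum_mul_sum]
  refine sum_congr rfl fun a _ => sum_congr rfl fun b _ => ?_
  rw [monomial_hvwExp, ← Nat.cast_mul, map_natCast]
  push_cast
  ring

theorem coeff_hvwExp_X_add_X_pow_mul_X_add_X_pow (p q r m l : ℕ) :
    coeff (hvwExp p q r) ((X 2 + X 0) ^ m * (X 1 + X 0) ^ l : MvPolynomial (Fin 3) R) =
      if p + q + r = m + l then (m.choose r * l.choose q : R) else 0 := by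
  simp only [X_add_X_pow_mul_X_add_X_pow, coeff_sum, coeff_monomial, hvwExp_inj]
  rw [sum_eq_single r (fun a _ ha => sum_eq_zero fun b _ => if_neg (by grind)) ?_,
    sum_eq_single q (fun b _ hb => if_neg (by grind)) ?_]
  · rcases le_or_gt r m with hr | hr
    · rcases le_or_gt q l with hq | hq
      · exact if_congr (by omega) rfl rfl
      · simp [Nat.choose_eq_zero_of_lt hq]
    · simp [Nat.choose_eq_zero_of_lt hr]
  · intro hq
    simp [Nat.choose_eq_zero_of_lt (show l < q by simpa using hq)]
  · intro hr
    simp [Nat.choose_eq_zero_of_lt (show m < r by simpa using hr)]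

theorem coeff_hvwExp_X_add_X_pow_mul_X_pow_mul (p q r m j l k : ℕ) :
    coeff (hvwExp p q r)
      ((X 2 + X 0) ^ m * X 1 ^ j * ((X 1 + X 0) ^ l * X 2 ^ k) : MvPolynomial (Fin 3) R) =
      if j ≤ q ∧ k ≤ r ∧ p + q + r = m + j + (l + k) then
        (m.choose (r - k) * l.choose (q - j) : R) else 0 := by
  have hshift :
      ((X 2 + X 0) ^ m * X 1 ^ j * ((X 1 + X 0) ^ l * X 2 ^ k) : MvPolynomial (Fin 3) R) =
        (X 2 + X 0) ^ m * (X 1 + X 0) ^ l * monomial (hvwExp 0 j k) 1 := by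
    rw [monomial_hvwExp, C_1]; ring
  simp only [hshift, coeff_mul_monomial', hvwExp_le_hvwExp, hvwExp_sub_hvwExp,
    coeff_hvwExp_X_add_X_pow_mul_X_add_X_pow, mul_one, zero_le, true_and]
  by_cases h : j ≤ q ∧ k ≤ r
  · rw [if_pos h, Nat.sub_zero]
    exact if_congr (by omega) rfl rfl
  · rw [if_neg h, if_neg fun h' => h ⟨h'.1, h'.2.1⟩]

/-- The coefficient of `h^(n-d) v^(d-1) w^(n-1)` in
`(∑_{j<n} (w+h)^(n-1-j) v^j) * (∑_{j<n} (v+h)^(n-1-j) w^j)` equals `2^(n-d) * C(n, d-1)`.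
Here `X 0 = h`, `X 1 = v`, `X 2 = w` in `ℤ[h,v,w]`. -/
theorem kalman_degree_square_matrices (n d : ℕ) (hd1 : 1 ≤ d) (hdn : d ≤ n) :
    MvPolynomial.coeff
      (Finsupp.single (0 : Fin 3) (n - d) + Finsupp.single 1 (d - 1) + Finsupp.single 2 (n - 1))
      ((∑ j ∈ Finset.range n, (X 2 + X 0) ^ (n - 1 - j) * (X 1 : MvPolynomial (Fin 3) ℤ) ^ j) *
        (∑ j ∈ Finset.range n, (X 1 + X 0) ^ (n - 1 - j) * (X 2) ^ j))
      = 2 ^ (n - d) * (n.choose (d - 1) : ℤ) := by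
  have hterm : ∀ j ∈ range n, ∀ k ∈ range n,
      coeff (hvwExp (n - d) (d - 1) (n - 1))
        ((X 2 + X 0) ^ (n - 1 - j) * X 1 ^ j * ((X 1 + X 0) ^ (n - 1 - k) * X 2 ^ k) :
          MvPolynomial (Fin 3) ℤ) =
        ((if j < d then (n - 1 - j).choose (n - 1 - k) * (n - 1 - k).choose (d - 1 - j)
          else 0 : ℕ) : ℤ) := by
    intro j hj k hk
    simp only [mem_range] at hj hk
    rw [coeff_hvwExp_X_add_X_pow_mul_X_pow_mul]
    by_cases hjd : j < d
    · rw [if_pos (by omega), if_pos hjd, Nat.cast_mul]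
    · rw [if_neg (by omega), if_neg hjd, Nat.cast_zero]
  change coeff (hvwExp (n - d) (d - 1) (n - 1)) _ = _
  rw [sum_mul_sum, coeff_sum]
  simp only [coeff_sum]
  rw [sum_congr rfl fun j hj => sum_congr rfl (hterm j hj)]
  exact_mod_cast sum_range_sum_range_choose_mul_choose hd1 hdn
end

section
/- Fix $k\ge 2$ and integers $n_1,\dots,n_{k-1}\ge 1$, and set $n_k-1=\sum_{i=1}^{k-1}(n_i-1)$ (boundary format). For variables $h,v_1,\dots,v_k$ let $\widetilde{v_i}=\sum_{j\ne i}v_j+ (\text{nothing else})$, i.e. $\widetilde{v_i}=\left(\sum_j v_j\right)-v_i$, and let $P_m = \left(\prod_{i=1}^{k-1}\sum_{j=0}^{n_i-1}(\widetilde{v_i}+h)^{n_i-1-j}v_i^{j}\right)\cdot\left(\sum_{j=0}^{m-1}(\widetilde{v_k}+h)^{m-1-j}v_k^{j}\right)$. Then for every $m\ge n_k$ and every $1\le d\le n_1$, the coefficient of $h^{n_1-d}v_1^{d-1}\left(\prod_{i=2}^{k-1}v_i^{n_i-1}\right)v_k^{m-1}$ in $P_m$ equals the coefficient of $h^{n_1-d}v_1^{d-1}\left(\prod_{i=2}^{k-1}v_i^{n_i-1}\right)v_k^{n_k-1}$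 in $P_{n_k}$. -/
/-! Write `P m = A * ∑_{j<m} w^(m-1-j) v^j` with `v = v_k` and `w = ṽ_k + h` free of `v`. Splitting
off `v^j`, the coefficient of `v^(m-1) · μ` in `P m` is `∑_{t<m} [v^t · μ] (A * w^t)`. In boundary
format `A` has total degree at most `n_k - 1`, so its degree in `v` is below `n_k`, and as `w` does
not involve `v` the terms with `t ≥ n_k` vanish: the sum is the same for all `m ≥ n_k`. -/

open MvPolynomial

/-- `ṽᵢ`: the sum of all variables `v_j` with `j ≠ i`, in
`ℤ[h, v_0, …, v_{k'}]` where `X none = h` and `X (some i) = v_i`. -/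
noncomputable def tildeV (k' : ℕ) (i : Fin (k' + 1)) :
    MvPolynomial (Option (Fin (k' + 1))) ℤ :=
  ∑ j ∈ Finset.univ.erase i, X (some j)

/-- The polynomial
`P m = (∏_{i<k'} ∑_{j<nᵢ} (ṽᵢ+h)^(nᵢ-1-j) vᵢ^j) * (∑_{j<m} (ṽ_{k'}+h)^(m-1-j) v_{k'}^j)`,
whose suitable coefficient computes the degree of the Kalman variety. -/
noncomputable def kalmanPoly (k' : ℕ) (n : Fin (k' + 1) → ℕ) (m : ℕ) :
    MvPolynomial (Option (Fin (k' + 1))) ℤ :=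
  (∏ i : Fin k', ∑ j ∈ Finset.range (n i.castSucc),
      (tildeV k' i.castSucc + X none) ^ (n i.castSucc - 1 - j) * (X (some i.castSucc)) ^ j) *
    (∑ j ∈ Finset.range m,
      (tildeV k' (Fin.last k') + X none) ^ (m - 1 - j) * (X (some (Fin.last k'))) ^ j)

/-- The exponent vector of the monomial `h^(n₀-d) v₀^(d-1) (∏_{0<i<k'} vᵢ^(nᵢ-1)) v_{k'}^(m-1)`. -/
noncomputable def kalmanExp (k' : ℕ) (n : Fin (k' + 1) → ℕ) (d m : ℕ) :
    Option (Fin (k' + 1)) →₀ ℕ :=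
  Finsupp.equivFunOnFinite.symm fun x =>
    match x with
    | none => n 0 - d
    | some i => if i = 0 then d - 1 else if i = Fin.last k' then m - 1 else n i - 1

section SumPowMulPow

open Finset

variable {R σ : Type*} [CommSemiring R]

lemma coeff_update_add_mul_X_pow (e : σ →₀ ℕ) (s : σ) (t j : ℕ) (p : MvPolynomial σ R) :
    coeff (e.update s (t + j)) (p * X s ^ j) = coeff (e.update s t) p := by
  have hsplit : e.update s (t + j) = e.update s t + Finsupp.single s j := by
    classical
    ext i
    rcases eq_or_ne i s with rfl | hi <;> simp [Finsupp.update_apply, *]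
  rw [hsplit, X_pow_eq_monomial, coeff_mul_monomial, mul_one]

lemma coeff_update_eq_zero_of_degreeOf_lt (e : σ →₀ ℕ) {s : σ} {t : ℕ} {p : MvPolynomial σ R}
    (hp : degreeOf s p < t) : coeff (e.update s t) p = 0 :=
  notMem_support_iff.mp <| notMem_support_of_degreeOf_lt s <| by
    classical simpa [Finsupp.update_apply] using hp

lemma coeff_update_mul_sum_pow_mul_X_pow (e : σ →₀ ℕ) (s : σ) (A w : MvPolynomial σ R) (m : ℕ) :
    coeff (e.update s (m - 1)) (A * ∑ j ∈ range m, w ^ (m - 1 - j) * X s ^ j)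
      = ∑ t ∈ range m, coeff (e.update s t) (A * w ^ t) := by
  rw [mul_sum, coeff_sum]
  conv_rhs => rw [← sum_range_reflect]
  refine sum_congr rfl fun j hj => ?_
  obtain ⟨t, rfl⟩ : ∃ t, m = t + j + 1 := ⟨m - 1 - j, by have := mem_range.mp hj; omega⟩
  rw [Nat.add_sub_cancel, Nat.add_sub_cancel, ← mul_assoc, coeff_update_add_mul_X_pow]

lemma coeff_update_mul_sum_pow_mul_X_pow_eq_of_le (e : σ →₀ ℕ) {s : σ} {A w : MvPolynomial σ R}
    (hw : degreeOf s w = 0) {N m : ℕ} (hA : degreeOf s A < N) (hm : N ≤ m) :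
    coeff (e.update s (m - 1)) (A * ∑ j ∈ range m, w ^ (m - 1 - j) * X s ^ j)
      = coeff (e.update s (N - 1)) (A * ∑ j ∈ range N, w ^ (N - 1 - j) * X s ^ j) := by
  rw [coeff_update_mul_sum_pow_mul_X_pow, coeff_update_mul_sum_pow_mul_X_pow]
  refine (sum_subset (range_subset_range.mpr hm) fun t _ ht => ?_).symm
  refine coeff_update_eq_zero_of_degreeOf_lt e ?_
  calc degreeOf s (A * w ^ t) ≤ degreeOf s A + degreeOf s (w ^ t) := degreeOf_mul_le _ _ _
    _ ≤ degreeOf s A + t * degreeOf s w := by gcongr; exact degreeOf_pow_le _ _ _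
    _ < t := by rw [hw]; simp only [mem_range, not_lt] at ht; omega

lemma totalDegree_sum_pow_mul_pow_le {a b : MvPolynomial σ R}
    (ha : a.totalDegree ≤ 1) (hb : b.totalDegree ≤ 1) (n : ℕ) :
    (∑ j ∈ range n, a ^ (n - 1 - j) * b ^ j).totalDegree ≤ n - 1 := by
  refine (totalDegree_finsetSum _ _).trans (Finset.sup_le fun j hj => ?_)
  have hj := mem_range.mp hj
  calc (a ^ (n - 1 - j) * b ^ j).totalDegree
      ≤ (n - 1 - j) * a.totalDegree + j * b.totalDegree :=
        (totalDegree_mul _ _).trans (add_le_add (totalDegree_pow _ _) (totalDegree_pow _ _))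
    _ ≤ (n - 1 - j) * 1 + j * 1 := by gcongr
    _ = n - 1 := by omega

end SumPowMulPow

noncomputable def kalmanFactor (k' : ℕ) (n : Fin (k' + 1) → ℕ) :
    MvPolynomial (Option (Fin (k' + 1))) ℤ :=
  ∏ i : Fin k', ∑ j ∈ Finset.range (n i.castSucc),
      (tildeV k' i.castSucc + X none) ^ (n i.castSucc - 1 - j) * (X (some i.castSucc)) ^ j

lemma kalmanPoly_eq_mul (k' : ℕ) (n : Fin (k' + 1) → ℕ) (m : ℕ) :
    kalmanPoly k' n m = kalmanFactor k' n *
      ∑ j ∈ Finset.range m,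
        (tildeV k' (Fin.last k') + X none) ^ (m - 1 - j) * (X (some (Fin.last k'))) ^ j := rfl

lemma totalDegree_tildeV_add_X_none_le (k' : ℕ) (i : Fin (k' + 1)) :
    (tildeV k' i + X none).totalDegree ≤ 1 :=
  (totalDegree_add _ _).trans <| max_le
    ((totalDegree_finsetSum _ _).trans (Finset.sup_le fun _ _ => (totalDegree_X _).le))
    (totalDegree_X _).le

lemma totalDegree_kalmanFactor_le (k' : ℕ) (n : Fin (k' + 1) → ℕ) :
    (kalmanFactor k' n).totalDegree ≤ ∑ i : Fin k', (n i.castSucc - 1) :=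
  (totalDegree_finsetProd _ _).trans <| Finset.sum_le_sum fun _ _ =>
    totalDegree_sum_pow_mul_pow_le (totalDegree_tildeV_add_X_none_le k' _)
      (totalDegree_X _).le _

lemma degreeOf_last_tildeV_last_add_X_none (k' : ℕ) :
    degreeOf (some (Fin.last k')) (tildeV k' (Fin.last k') + X none) = 0 := by
  refine Nat.le_zero.mp ((degreeOf_add_le _ _ _).trans (max_le ?_ ?_))
  · refine (degreeOf_sum_le _ _ _).trans (Finset.sup_le fun j hj => ?_)
    rw [degreeOf_X_of_ne (by simpa [eq_comm] using Finset.ne_of_mem_erase hj)]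
  · rw [degreeOf_X_of_ne (Option.some_ne_none _)]

lemma kalmanExp_eq_update (k' : ℕ) (hk : 1 ≤ k') (n : Fin (k' + 1) → ℕ) (d m : ℕ) :
    kalmanExp k' n d m = (kalmanExp k' n d 1).update (some (Fin.last k')) (m - 1) := by
  classical
  have hlast : Fin.last k' ≠ 0 := Fin.ext_iff.not.mpr (by simp; omega)
  ext (_ | i)
  · simp [kalmanExp]
  · rcases eq_or_ne i (Fin.last k') with rfl | hi
    · simp [kalmanExp, hlast]
    · simp [kalmanExp, Finsupp.update_apply, hi]

theorem kalman_degree_stabilization_general (k' : ℕ) (hk : 1 ≤ k')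
    (n : Fin (k' + 1) → ℕ) (hn : ∀ i, 1 ≤ n i)
    (hbd : n (Fin.last k') - 1 = ∑ i : Fin k', (n i.castSucc - 1))
    (d : ℕ)
    (m : ℕ) (hm : n (Fin.last k') ≤ m) :
    MvPolynomial.coeff (kalmanExp k' n d m) (kalmanPoly k' n m)
      = MvPolynomial.coeff (kalmanExp k' n d (n (Fin.last k')))
          (kalmanPoly k' n (n (Fin.last k'))) := by
  rw [kalmanPoly_eq_mul, kalmanPoly_eq_mul, kalmanExp_eq_update k' hk,
    kalmanExp_eq_update k' hk (m := n (Fin.last k'))]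
  refine coeff_update_mul_sum_pow_mul_X_pow_eq_of_le _
    (degreeOf_last_tildeV_last_add_X_none k') ?_ hm
  calc degreeOf _ (kalmanFactor k' n) ≤ (kalmanFactor k' n).totalDegree :=
        degreeOf_le_totalDegree _ _
    _ ≤ n (Fin.last k') - 1 := hbd ▸ totalDegree_kalmanFactor_le k' n
    _ < n (Fin.last k') := Nat.sub_lt (hn _) one_pos

/-- Stabilization at the boundary format: if `n_{k'} - 1 = ∑_{i<k'} (nᵢ - 1)` then for every
`m ≥ n_{k'}` the degree coefficient of `P m` equals the one of `P (n_{k'})`. -/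
theorem kalman_degree_stabilization (k' : ℕ) (hk : 1 ≤ k')
    (n : Fin (k' + 1) → ℕ) (hn : ∀ i, 1 ≤ n i)
    (hbd : n (Fin.last k') - 1 = ∑ i : Fin k', (n i.castSucc - 1))
    (d : ℕ) (hd1 : 1 ≤ d) (hd2 : d ≤ n 0)
    (m : ℕ) (hm : n (Fin.last k') ≤ m) :
    MvPolynomial.coeff (kalmanExp k' n d m) (kalmanPoly k' n m)
      = MvPolynomial.coeff (kalmanExp k' n d (n (Fin.last k')))
          (kalmanPoly k' n (n (Fin.last k'))) :=
  kalman_degree_stabilization_general k' hk n hn hbd d m hm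
end

section
/- Let $L\subseteq\mathbb{C}^n$ be the line spanned by a nonzero vector $v_0$, and let $C$ be an $(n-1)\times n$ matrix with $L=\{v\in\mathbb{C}^n : Cv=0\}$. Then an $n\times m$ complex matrix $A$ has a singular pair $(v,w)$ with $v\in L$ if and only if $C(AA^t)v_0=0$ and $\mathrm{rank}(CA)\le m-1$. -/
open Matrix

/-- For `d = 1`, `L = ⟨v₀⟩` cut out by an `(n-1) × n` matrix `C`: the matrix `A` has a
singular pair `(v, w)` with `v ∈ L` iff `C (A Aᵀ) v₀ = 0` and `rank (C A) ≤ m - 1`. -/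
theorem kalman_line_equations (n m : ℕ) (hn : 1 ≤ n) (hm : 1 ≤ m)
    (v0 : Fin n → ℂ) (hv0 : v0 ≠ 0)
    (C : Matrix (Fin (n - 1)) (Fin n) ℂ)
    (hC : ∀ v : Fin n → ℂ, C.mulVec v = 0 ↔ v ∈ Submodule.span ℂ {v0})
    (A : Matrix (Fin n) (Fin m) ℂ) :
    (∃ (v : Fin n → ℂ) (w : Fin m → ℂ) (l1 l2 : ℂ), v ≠ 0 ∧ w ≠ 0 ∧
        v ∈ Submodule.span ℂ {v0} ∧ A.mulVec w = l1 • v ∧ Aᵀ.mulVec v = l2 • w) ↔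
      (C.mulVec ((A * Aᵀ).mulVec v0) = 0 ∧ (C * A).rank ≤ m - 1) := by
  have hrank : (C * A).rank + Module.finrank ℂ (LinearMap.ker (C * A).mulVecLin) = m := by
    have := LinearMap.finrank_range_add_finrank_ker (C * A).mulVecLin
    simpa [Matrix.rank, Module.finrank_pi] using this
  constructor
  · rintro ⟨v, w, l1, l2, hv, hw, hvL, hAw, hAtv⟩
    obtain ⟨c, rfl⟩ := Submodule.mem_span_singleton.mp hvL
    have hc : c ≠ 0 := by rintro rfl; simp at hv
    constructor
    · have h1 : (A * Aᵀ).mulVec v0 = (c⁻¹ * l2 * l1 * c) • v0 := by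
        have : (A * Aᵀ).mulVec (c • v0) = A.mulVec (l2 • w) := by
          rw [← Matrix.mulVec_mulVec, hAtv]
        rw [Matrix.mulVec_smul] at this
        have h2 : (A * Aᵀ).mulVec v0 = c⁻¹ • (l2 • A.mulVec w) := by
          rw [← Matrix.mulVec_smul] at this
          calc (A * Aᵀ).mulVec v0 = c⁻¹ • (A * Aᵀ).mulVec (c • v0) := by
                rw [Matrix.mulVec_smul, smul_smul, inv_mul_cancel₀ hc, one_smul]
            _ = c⁻¹ • (l2 • A.mulVec w) := by rw [this, Matrix.mulVec_smul]
        rw [h2, hAw]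
        simp only [smul_smul]
        ring_nf
      rw [h1]
      rw [Matrix.mulVec_smul]
      rw [show C.mulVec v0 = 0 from (hC v0).mpr (Submodule.mem_span_singleton_self v0)]
      simp
    · -- w is in the kernel of C * A
      have hker : (C * A).mulVec w = 0 := by
        rw [← Matrix.mulVec_mulVec, hAw, Matrix.mulVec_smul,
          show C.mulVec (c • v0) = 0 from (hC _).mpr hvL]
        simp
      have h1 : 1 ≤ Module.finrank ℂ (LinearMap.ker (C * A).mulVecLin) := by
        have : w ∈ LinearMap.ker (C * A).mulVecLin := by
          simpa [Matrix.mulVecLin] using hker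
        have hne : LinearMap.ker (C * A).mulVecLin ≠ ⊥ := by
          intro h; rw [h] at this; exact hw (Submodule.mem_bot ℂ |>.mp this)
        exact Submodule.one_le_finrank_iff.mpr hne
      omega
  · rintro ⟨h1, h2⟩
    -- A Aᵀ v0 ∈ span {v0}
    have hAAt : (A * Aᵀ).mulVec v0 ∈ Submodule.span ℂ {v0} := (hC _).mp h1
    obtain ⟨μ, hμ⟩ := Submodule.mem_span_singleton.mp hAAt
    by_cases hAt : Aᵀ.mulVec v0 = 0
    · -- take any nonzero w in ker (C * A)
      have hker : LinearMap.ker (C * A).mulVecLin ≠ ⊥ := by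
        intro h
        rw [h] at hrank
        simp at hrank
        omega
      obtain ⟨w, hwmem, hw⟩ := Submodule.exists_mem_ne_zero_of_ne_bot hker
      have hCAw : (C * A).mulVec w = 0 := hwmem
      have : A.mulVec w ∈ Submodule.span ℂ {v0} := by
        apply (hC _).mp
        rw [← Matrix.mulVec_mulVec] at hCAw
        exact hCAw
      obtain ⟨l1, hl1⟩ := Submodule.mem_span_singleton.mp this
      exact ⟨v0, w, l1, 0, hv0, hw, Submodule.mem_span_singleton_self v0,
        hl1.symm, by rw [hAt, zero_smul]⟩
    · refine ⟨v0, Aᵀ.mulVec v0, μ, 1, hv0, hAt, Submodule.mem_span_singleton_self v0, ?_, ?_⟩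
      · rw [Matrix.mulVec_mulVec, hμ]
      · rw [one_smul]
end
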